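/- arXiv:1306.0931 — 2 statements merged into one kernel-verified Lean document; each statement's English description precedes it below -/
import Mathlib

section
/- Let Δt > 0 and let β₁ = β₃ = (2 + 2^{1/3} + 2^{-1/3})/3, β₂ = 1 − 2β₁. Suppose (f⁰,E⁰), (f¹,E¹), (f²,E²), (f³,E³) are pairs of phase-space densities and electric fields such that for each i ∈ {1,2,3} the pair (fⁱ,Eⁱ) is obtained from (f^{i−1},E^{i−1}) by an implicit midpoint Scheme-2 step of size βᵢΔt, i.e. pointwise fⁱ(x,v) = f^{i−1}(x,v) − βᵢΔt( v·∇_x gⁱ(x,v) + (1/2)(E^{i−1}(x)+Eⁱ(x))·∇_v gⁱ(x,v) ) with gⁱ = (f^{i−1} + fⁱ)/2, and Eⁱ(x) = E^{i−1}(x) − (βᵢΔt/2)( J_{f^{i−1}}(x) + J_{fⁱ}(x) ). Then the fourth-order composed scheme Scheme-2F conserves the discrete total energy: K(f³) + W(E³) = K(f⁰) + W(E⁰). -/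
open MeasureTheory
open scoped RealInnerProductSpace

noncomputable section

/-- Points of `ℝ^d`. -/
abbrev Vec (d : ℕ) := EuclideanSpace ℝ (Fin d)

/-- Gradient of a phase-space function in its first (`x`) argument. -/
def gradx {d : ℕ} (f : Vec d × Vec d → ℝ) (x v : Vec d) : Vec d :=
  gradient (fun y => f (y, v)) x

/-- Gradient of a phase-space function in its second (`v`) argument. -/
def gradv {d : ℕ} (f : Vec d × Vec d → ℝ) (x v : Vec d) : Vec d :=
  gradient (fun w => f (x, w)) v

/-- Charge density `ρ_f(x) = ∫ f(x,v) dv`. -/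
def rho {d : ℕ} (f : Vec d × Vec d → ℝ) (x : Vec d) : ℝ :=
  ∫ v, f (x, v)

/-- Current `J_f(x) = ∫ f(x,v) v dv`. -/
def Jcur {d : ℕ} (f : Vec d × Vec d → ℝ) (x : Vec d) : Vec d :=
  ∫ v, f (x, v) • v

/-- Particle number `N(f)`. -/
def Npart {d : ℕ} (f : Vec d × Vec d → ℝ) : ℝ :=
  ∫ x, ∫ v, f (x, v)

/-- Kinetic energy `K(f) = ∫∫ f(x,v) |v|² dv dx`. -/
def Kin {d : ℕ} (f : Vec d × Vec d → ℝ) : ℝ :=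
  ∫ x, ∫ v, f (x, v) * ‖v‖ ^ 2

/-- Electric energy `W(E) = ∫ |E(x)|² dx`. -/
def Wel {d : ℕ} (E : Vec d → Vec d) : ℝ :=
  ∫ x, ‖E x‖ ^ 2

/-- A phase-space density: smooth and compactly supported. -/
def IsDensity {d : ℕ} (f : Vec d × Vec d → ℝ) : Prop :=
  ContDiff ℝ (⊤ : ℕ∞) f ∧ HasCompactSupport f

/-- An electric field: continuous with finite electric energy. -/
def IsEField {d : ℕ} (E : Vec d → Vec d) : Prop :=
  Continuous E ∧ Integrable (fun x => ‖E x‖ ^ 2)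

/-- Divergence in `x` of a vector field on `ℝ^d`. -/
def divg {d : ℕ} (F : Vec d → Vec d) (x : Vec d) : ℝ :=
  ∑ i : Fin d, fderiv ℝ F x (EuclideanSpace.single i 1) i

/-- One implicit midpoint Scheme-2 step of size `τ` taking `(fn, En)` to `(fn1, En1)`. -/
def Scheme2Step {d : ℕ} (τ : ℝ) (fn fn1 : Vec d × Vec d → ℝ)
    (En En1 : Vec d → Vec d) : Prop :=
  (∀ x v : Vec d, fn1 (x, v) =
    fn (x, v) - τ * (⟪v, gradx (fun p => (fn p + fn1 p) / 2) x v⟫ +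
      (1 / 2) * ⟪En x + En1 x, gradv (fun p => (fn p + fn1 p) / 2) x v⟫)) ∧
  (∀ x : Vec d, En1 x = En x - (τ / 2) • (Jcur fn x + Jcur fn1 x))

section EnergyHelpers

open Function

lemma fubini1 {d : ℕ} (f : Vec d × Vec d → ℝ) (hf : Integrable f) :
    ∫ x : Vec d, ∫ v : Vec d, f (x, v) = ∫ p, f p := by
  have h2 : Integrable (Function.uncurry fun x v => f (x, v))
      ((volume : Measure (Vec d)).prod volume) := by
    rwa [← Measure.volume_eq_prod]
  calc ∫ x : Vec d, ∫ v : Vec d, f (x, v)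
      = ∫ p, f p ∂((volume : Measure (Vec d)).prod volume) := integral_integral h2
    _ = ∫ p, f p := by rw [← Measure.volume_eq_prod]

lemma fubini2 {d : ℕ} (f : Vec d × Vec d → ℝ) (hf : Integrable f) :
    ∫ p, f p = ∫ v : Vec d, ∫ x : Vec d, f (x, v) := by
  have h2 : Integrable (Function.uncurry fun x v => f (x, v))
      ((volume : Measure (Vec d)).prod volume) := by
    rwa [← Measure.volume_eq_prod]
  calc ∫ p, f p = ∫ p, f p ∂((volume : Measure (Vec d)).prod volume) := by
        rw [← Measure.volume_eq_prod]
    _ = ∫ x : Vec d, ∫ v : Vec d, f (x, v) := (integral_integral h2).symm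
    _ = ∫ v : Vec d, ∫ x : Vec d, f (x, v) := integral_integral_swap h2

lemma hcs_slice_right {d : ℕ} {f : Vec d × Vec d → ℝ} (hf : HasCompactSupport f) (x : Vec d) :
    HasCompactSupport (fun v : Vec d => f (x, v)) := by
  apply HasCompactSupport.intro (hf.image continuous_snd)
  intro v hv
  by_contra h0
  exact hv ⟨(x, v), subset_closure (mem_support.mpr h0), rfl⟩

lemma hcs_slice_left {d : ℕ} {f : Vec d × Vec d → ℝ} (hf : HasCompactSupport f) (v : Vec d) :
    HasCompactSupport (fun x : Vec d => f (x, v)) := by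
  apply HasCompactSupport.intro (hf.image continuous_fst)
  intro x hx
  by_contra h0
  exact hx ⟨(x, v), subset_closure (mem_support.mpr h0), rfl⟩

lemma fderiv_zero_off {E F : Type*} [NormedAddCommGroup E] [NormedSpace ℝ E]
    [NormedAddCommGroup F] [NormedSpace ℝ F] {g : E → F} {p : E}
    (hp : p ∉ tsupport g) : fderiv ℝ g p = 0 := by
  by_contra hne
  exact hp (support_fderiv_subset ℝ (mem_support.mpr hne))

lemma fderiv_slice_left {d : ℕ} {f : Vec d × Vec d → ℝ} (hf : ContDiff ℝ (⊤ : ℕ∞) f) (x v : Vec d) :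
    fderiv ℝ (fun y => f (y, v)) x = (fderiv ℝ f (x, v)).comp (ContinuousLinearMap.inl ℝ _ _) :=
  ((hf.differentiable (by simp) (x, v)).hasFDerivAt.comp x (hasFDerivAt_prodMk_left x v)).fderiv

lemma fderiv_slice_right {d : ℕ} {f : Vec d × Vec d → ℝ} (hf : ContDiff ℝ (⊤ : ℕ∞) f) (x v : Vec d) :
    fderiv ℝ (fun w => f (x, w)) v = (fderiv ℝ f (x, v)).comp (ContinuousLinearMap.inr ℝ _ _) :=
  ((hf.differentiable (by simp) (x, v)).hasFDerivAt.comp v (hasFDerivAt_prodMk_right x v)).fderiv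

lemma inner_gradx_eq {d : ℕ} {f : Vec d × Vec d → ℝ} (hf : ContDiff ℝ (⊤ : ℕ∞) f) (x v c : Vec d) :
    ⟪c, gradx f x v⟫ = fderiv ℝ f (x, v) (c, 0) := by
  unfold gradx gradient
  rw [real_inner_comm, InnerProductSpace.toDual_symm_apply, fderiv_slice_left hf]
  rfl

lemma inner_gradv_eq {d : ℕ} {f : Vec d × Vec d → ℝ} (hf : ContDiff ℝ (⊤ : ℕ∞) f) (x v c : Vec d) :
    ⟪c, gradv f x v⟫ = fderiv ℝ f (x, v) (0, c) := by
  unfold gradv gradient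
  rw [real_inner_comm, InnerProductSpace.toDual_symm_apply, fderiv_slice_right hf]
  rfl

lemma hasFDerivAt_normsq {d : ℕ} (v : Vec d) :
    HasFDerivAt (fun w : Vec d => ‖w‖ ^ 2)
      (2 • (innerSL ℝ v : Vec d →L[ℝ] ℝ)) v := by
  have h := (hasFDerivAt_id v).inner ℝ (hasFDerivAt_id v)
  have h2 : (fun t : Vec d => (inner ℝ (id t) (id t) : ℝ)) = fun w : Vec d => ‖w‖ ^ 2 := by
    ext w; exact real_inner_self_eq_norm_sq w
  rw [h2] at h
  refine h.congr_fderiv ?_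
  ext w
  simp [real_inner_comm, two_smul, mul_comm]

lemma fderiv_normsq_apply {d : ℕ} (v w : Vec d) :
    fderiv ℝ (fun w : Vec d => ‖w‖ ^ 2) v w = 2 * ⟪v, w⟫ := by
  rw [(hasFDerivAt_normsq v).fderiv]
  simp [two_smul]
  ring

lemma integral_fderiv_dir_zero {d : ℕ} {h : Vec d → ℝ} (hh : ContDiff ℝ (⊤ : ℕ∞) h)
    (hc : HasCompactSupport h) (u : Vec d) : ∫ x, fderiv ℝ h x u = 0 := by
  have hint : Integrable (fun x => fderiv ℝ h x u) := by
    apply Continuous.integrable_of_hasCompactSupport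
    · exact (hh.continuous_fderiv (by simp)).clm_apply continuous_const
    · apply HasCompactSupport.intro hc
      intro x hx; rw [fderiv_zero_off hx]; rfl
  have := integral_mul_fderiv_eq_neg_fderiv_mul_of_integrable
    (f := fun _ : Vec d => (1 : ℝ)) (g := h) (v := u) (μ := volume)
    ?_ ?_ ?_ (fun x _ => differentiableAt_const (1 : ℝ)) (fun x _ => hh.differentiable (by simp) x)
  · simpa using this
  · simp
  · simpa using hint
  · simpa using hh.continuous.integrable_of_hasCompactSupport hc

end EnergyHelpers

lemma scheme2_step_energy {d : ℕ} {τ : ℝ} {fn fn1 : Vec d × Vec d → ℝ}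
    {En En1 : Vec d → Vec d}
    (hfn : IsDensity fn) (hfn1 : IsDensity fn1)
    (hEn : IsEField En) (hEn1 : IsEField En1)
    (hs : Scheme2Step τ fn fn1 En En1) :
    Kin fn1 + Wel En1 = Kin fn + Wel En := by
  obtain ⟨hs1, hs2⟩ := hs
  set g : Vec d × Vec d → ℝ := fun p => (fn p + fn1 p) / 2 with hgdef
  have hg : ContDiff ℝ (⊤ : ℕ∞) g := (hfn.1.add hfn1.1).div_const 2
  have hgc : HasCompactSupport g := by
    have : HasCompactSupport (fun p => fn p + fn1 p) := hfn.2.add hfn1.2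
    exact this.comp_left (g := fun r : ℝ => r / 2) (by simp)
  have hgcont : Continuous g := hg.continuous
  -- slice integrability for currents
  have slice_int : ∀ (h : Vec d × Vec d → ℝ), Continuous h → HasCompactSupport h →
      ∀ x : Vec d, Integrable (fun v : Vec d => h (x, v) • v) := by
    intro h hc hcs x
    apply Continuous.integrable_of_hasCompactSupport
    · exact (hc.comp (Continuous.prodMk_right x)).smul continuous_id
    · apply HasCompactSupport.intro (hcs_slice_right hcs x)
      intro v hv
      rw [image_eq_zero_of_notMem_tsupport hv, zero_smul]
  -- the two integrands
  set A : Vec d × Vec d → ℝ := fun p => fderiv ℝ g p (p.2, 0) * ‖p.2‖ ^ 2 with hAdef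
  set B : Vec d × Vec d → ℝ :=
    fun p => fderiv ℝ g p (0, En p.1 + En1 p.1) * ‖p.2‖ ^ 2 with hBdef
  have hnormsq : Continuous (fun p : Vec d × Vec d => ‖p.2‖ ^ 2) :=
    (continuous_snd.norm).pow 2
  have contDg : Continuous (fderiv ℝ g) := hg.continuous_fderiv (by simp)
  have intA : Integrable A := by
    apply Continuous.integrable_of_hasCompactSupport
    · exact (contDg.clm_apply (continuous_snd.prodMk continuous_const)).mul hnormsq
    · apply HasCompactSupport.intro hgc
      intro p hp; rw [hAdef]; simp only [fderiv_zero_off hp]; simp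
  have intB : Integrable B := by
    apply Continuous.integrable_of_hasCompactSupport
    · exact (contDg.clm_apply (continuous_const.prodMk
        ((hEn.1.add hEn1.1).comp continuous_fst))).mul hnormsq
    · apply HasCompactSupport.intro hgc
      intro p hp; rw [hBdef]; simp only [fderiv_zero_off hp]; simp
  have intK : ∀ (h : Vec d × Vec d → ℝ), IsDensity h →
      Integrable (fun p : Vec d × Vec d => h p * ‖p.2‖ ^ 2) := by
    intro h hh
    apply Continuous.integrable_of_hasCompactSupport
    · exact hh.1.continuous.mul hnormsq
    · apply HasCompactSupport.intro hh.2
      intro p hp; rw [image_eq_zero_of_notMem_tsupport hp, zero_mul]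
  -- pointwise kinetic identity
  have key : ∀ p : Vec d × Vec d, fn1 p * ‖p.2‖ ^ 2 =
      fn p * ‖p.2‖ ^ 2 - τ * A p - (τ / 2) * B p := by
    intro p
    have h1 := hs1 p.1 p.2
    have hx := inner_gradx_eq hg p.1 p.2 p.2
    have hv := inner_gradv_eq hg p.1 p.2 (En p.1 + En1 p.1)
    rw [hx, hv] at h1
    simp only [Prod.mk.eta] at h1
    rw [hAdef, hBdef]
    simp only []
    rw [h1]
    ring
  -- ∫ A = 0
  have intA0 : ∫ p : Vec d × Vec d, A p = 0 := by
    rw [fubini2 _ intA]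
    have hinner : ∀ v : Vec d, ∫ x : Vec d, A (x, v) = 0 := by
      intro v
      have hrw : (fun x : Vec d => A (x, v)) =
          fun x : Vec d => (fderiv ℝ (fun y => g (y, v)) x v) * ‖v‖ ^ 2 := by
        ext x
        rw [hAdef]; simp only []
        rw [fderiv_slice_left hg]
        rfl
      rw [hrw, integral_mul_const,
        integral_fderiv_dir_zero (h := fun y => g (y, v))
          (hg.comp (contDiff_id.prodMk contDiff_const))
          (hcs_slice_left hgc v) v, zero_mul]
    simp only [hinner, integral_zero]
  -- ∫ B in terms of the current
  have hBinner : ∀ x : Vec d, ∫ v : Vec d, B (x, v) =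
      (-2) * ⟪En x + En1 x, Jcur g x⟫ := by
    intro x
    set cx : Vec d := En x + En1 x with hcx
    have hgslice : ContDiff ℝ (⊤ : ℕ∞) (fun w : Vec d => g (x, w)) :=
      hg.comp (contDiff_const.prodMk contDiff_id)
    have hrw : (fun v : Vec d => B (x, v)) =
        fun v : Vec d => ‖v‖ ^ 2 * fderiv ℝ (fun w => g (x, w)) v cx := by
      ext v
      rw [hBdef]; simp only []
      rw [fderiv_slice_right hg]
      simp only [ContinuousLinearMap.comp_apply, ContinuousLinearMap.inr_apply]
      ring
    have h1 : Integrable (fun v : Vec d => fderiv ℝ (fun w : Vec d => ‖w‖ ^ 2) v cx * g (x, v)) := by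
      apply Continuous.integrable_of_hasCompactSupport
      · have : Continuous (fun v : Vec d => fderiv ℝ (fun w : Vec d => ‖w‖ ^ 2) v cx) := by
          have : (fun v : Vec d => fderiv ℝ (fun w : Vec d => ‖w‖ ^ 2) v cx) =
              fun v : Vec d => 2 * ⟪v, cx⟫ := by
            ext v; exact fderiv_normsq_apply v cx
          rw [this]
          exact continuous_const.mul (continuous_id.inner continuous_const)
        exact this.mul (hgcont.comp (Continuous.prodMk_right x))
      · apply HasCompactSupport.intro (hcs_slice_right hgc x)
        intro v hv
        rw [image_eq_zero_of_notMem_tsupport hv, mul_zero]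
    have h2 : Integrable (fun v : Vec d => ‖v‖ ^ 2 * fderiv ℝ (fun w => g (x, w)) v cx) := by
      apply Continuous.integrable_of_hasCompactSupport
      · exact (continuous_norm.pow 2).mul
          ((hgslice.continuous_fderiv (by simp)).clm_apply continuous_const)
      · apply HasCompactSupport.intro (hcs_slice_right hgc x)
        intro v hv
        rw [fderiv_zero_off hv]
        simp
    have h3 : Integrable (fun v : Vec d => ‖v‖ ^ 2 * g (x, v)) := by
      apply Continuous.integrable_of_hasCompactSupport
      · exact (continuous_norm.pow 2).mul (hgcont.comp (Continuous.prodMk_right x))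
      · apply HasCompactSupport.intro (hcs_slice_right hgc x)
        intro v hv
        rw [image_eq_zero_of_notMem_tsupport hv, mul_zero]
    have ibp := integral_mul_fderiv_eq_neg_fderiv_mul_of_integrable
      (f := fun w : Vec d => ‖w‖ ^ 2) (g := fun w => g (x, w)) (v := cx) (μ := volume)
      h1 h2 h3 (fun w _ => (hasFDerivAt_normsq w).differentiableAt)
      (fun w _ => hgslice.differentiable (by simp) w)
    rw [hrw, ibp]
    have hrw2 : (fun v : Vec d => fderiv ℝ (fun w : Vec d => ‖w‖ ^ 2) v cx * g (x, v)) =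
        fun v : Vec d => 2 * ⟪cx, g (x, v) • v⟫ := by
      ext v
      rw [fderiv_normsq_apply, real_inner_smul_right, real_inner_comm]
      ring
    rw [hrw2, integral_const_mul, integral_inner (slice_int g hgcont hgc x)]
    rw [Jcur]
    ring
  -- kinetic energy identity
  have kin_eq : Kin fn1 = Kin fn + τ * ∫ x : Vec d, ⟪En x + En1 x, Jcur g x⟫ := by
    have e1 : Kin fn1 = ∫ p : Vec d × Vec d, fn1 p * ‖p.2‖ ^ 2 := fubini1 _ (intK fn1 hfn1)
    have e2 : Kin fn = ∫ p : Vec d × Vec d, fn p * ‖p.2‖ ^ 2 := fubini1 _ (intK fn hfn)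
    rw [e1, e2]
    have e3 : ∫ p : Vec d × Vec d, fn1 p * ‖p.2‖ ^ 2 =
        ∫ p : Vec d × Vec d, (fn p * ‖p.2‖ ^ 2 - τ * A p - (τ / 2) * B p) :=
      integral_congr_ae (Filter.Eventually.of_forall key)
    rw [e3]
    have s1 : ∫ p : Vec d × Vec d, (fn p * ‖p.2‖ ^ 2 - τ * A p - τ / 2 * B p)
        = (∫ p : Vec d × Vec d, (fn p * ‖p.2‖ ^ 2 - τ * A p)) -
          ∫ p : Vec d × Vec d, τ / 2 * B p :=
      integral_sub ((intK fn hfn).sub (intA.const_mul τ)) (intB.const_mul (τ / 2))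
    have s2 : ∫ p : Vec d × Vec d, (fn p * ‖p.2‖ ^ 2 - τ * A p)
        = (∫ p : Vec d × Vec d, fn p * ‖p.2‖ ^ 2) - ∫ p : Vec d × Vec d, τ * A p :=
      integral_sub (intK fn hfn) (intA.const_mul τ)
    have e4 : ∫ p : Vec d × Vec d, B p = ∫ x : Vec d, (-2) * ⟪En x + En1 x, Jcur g x⟫ := by
      rw [← fubini1 _ intB]
      exact integral_congr_ae (Filter.Eventually.of_forall hBinner)
    rw [s1, s2, integral_const_mul, integral_const_mul, intA0, e4, integral_const_mul]
    ring
  -- current of g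
  have hJg : ∀ x : Vec d, Jcur fn x + Jcur fn1 x = (2 : ℝ) • Jcur g x := by
    intro x
    unfold Jcur
    rw [← integral_add (slice_int fn hfn.1.continuous hfn.2 x)
      (slice_int fn1 hfn1.1.continuous hfn1.2 x), ← integral_smul]
    congr 1
    ext v
    rw [hgdef]
    simp only []
    rw [smul_smul, mul_div_cancel₀ _ (two_ne_zero), add_smul]
  -- pointwise electric identity
  have hWpt : ∀ x : Vec d, ‖En1 x‖ ^ 2 =
      ‖En x‖ ^ 2 - τ * ⟪En x + En1 x, Jcur g x⟫ := by
    intro x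
    have h2 := hs2 x
    rw [hJg x, smul_smul] at h2
    have h3 : En1 x = En x - τ • Jcur g x := by rw [h2]; norm_num
    rw [h3, norm_sub_sq_real]
    have hJ : ⟪Jcur g x, En x⟫ = ⟪En x, Jcur g x⟫ := real_inner_comm _ _
    simp only [inner_add_left, inner_sub_left, inner_smul_left, inner_smul_right,
      real_inner_self_eq_norm_sq, conj_trivial, norm_smul, Real.norm_eq_abs, mul_pow,
      sq_abs, hJ]
    ring
  -- electric energy identity
  have hq_int : Integrable (fun x : Vec d => τ * ⟪En x + En1 x, Jcur g x⟫) := by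
    have : (fun x : Vec d => τ * ⟪En x + En1 x, Jcur g x⟫) =
        fun x => ‖En x‖ ^ 2 - ‖En1 x‖ ^ 2 := by
      ext x; rw [hWpt x]; ring
    rw [this]
    exact hEn.2.sub hEn1.2
  have wel_eq : Wel En1 = Wel En - τ * ∫ x : Vec d, ⟪En x + En1 x, Jcur g x⟫ := by
    unfold Wel
    have : (fun x : Vec d => ‖En1 x‖ ^ 2) =
        fun x => ‖En x‖ ^ 2 - τ * ⟪En x + En1 x, Jcur g x⟫ := by
      ext x; exact hWpt x
    rw [this, integral_sub hEn.2 hq_int, integral_const_mul]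
  rw [kin_eq, wel_eq]
  ring

/-- total energy conservation for the fourth-order composition Scheme-2F. -/
theorem scheme2F_total_energy_conservation
    {d : ℕ} (hd : 1 ≤ d) (Δt : ℝ) (hΔt : 0 < Δt)
    (β₁ β₂ β₃ : ℝ)
    (hβ₁ : β₁ = (2 + (2 : ℝ) ^ ((1 : ℝ) / 3) + (2 : ℝ) ^ (-(1 : ℝ) / 3)) / 3)
    (hβ₃ : β₃ = β₁) (hβ₂ : β₂ = 1 - 2 * β₁)
    (f0 f1 f2 f3 : Vec d × Vec d → ℝ) (E0 E1 E2 E3 : Vec d → Vec d)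
    (hf0 : IsDensity f0) (hf1 : IsDensity f1) (hf2 : IsDensity f2) (hf3 : IsDensity f3)
    (hE0 : IsEField E0) (hE1 : IsEField E1) (hE2 : IsEField E2) (hE3 : IsEField E3)
    (hs1 : Scheme2Step (β₁ * Δt) f0 f1 E0 E1)
    (hs2 : Scheme2Step (β₂ * Δt) f1 f2 E1 E2)
    (hs3 : Scheme2Step (β₃ * Δt) f2 f3 E2 E3) :
    Kin f3 + Wel E3 = Kin f0 + Wel E0 := by
  
  have h1 := scheme2_step_energy hf0 hf1 hE0 hE1 hs1
  have h2 := scheme2_step_energy hf1 hf2 hE1 hE2 hs2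
  have h3 := scheme2_step_energy hf2 hf3 hE2 hE3 hs3
  linarith
end
end

section
/- Let Δt ∈ ℝ, let f^n, f^{n+1/2}, f^{n+1} be phase-space densities and E^n, E^{n+1} electric fields such that pointwise f^{n+1}(x,v) = f^n(x,v) − Δt( v·∇_x f^{n+1/2}(x,v) + (1/2)(E^n(x)+E^{n+1}(x))·∇_v f^{n+1/2}(x,v) ). Then the total particle number is conserved: N(f^{n+1}) = N(f^n). -/
open MeasureTheory
open scoped RealInnerProductSpace

noncomputable section

lemma slice_ccs_left {d : ℕ} {β : Type*} [Zero β] {f : Vec d × Vec d → β}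
    (hs : HasCompactSupport f) (v : Vec d) :
    HasCompactSupport (fun x => f (x, v)) := by
  apply HasCompactSupport.intro (hs.isCompact.image continuous_fst)
  intro x hx
  by_contra h0
  exact hx ⟨(x, v), subset_tsupport _ h0, rfl⟩

lemma slice_ccs_right {d : ℕ} {β : Type*} [Zero β] {f : Vec d × Vec d → β}
    (hs : HasCompactSupport f) (x : Vec d) :
    HasCompactSupport (fun v => f (x, v)) := by
  apply HasCompactSupport.intro (hs.isCompact.image continuous_snd)
  intro v hv
  by_contra h0
  exact hv ⟨(x, v), subset_tsupport _ h0, rfl⟩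

lemma fderiv_apply_integrable {d : ℕ} {h : Vec d → ℝ}
    (hc : ContDiff ℝ (⊤ : ℕ∞) h) (hs : HasCompactSupport h) (c : Vec d) :
    Integrable (fun x => fderiv ℝ h x c) := by
  exact ((hc.continuous_fderiv (by simp)).clm_apply continuous_const).integrable_of_hasCompactSupport
    (hs.fderiv_apply ℝ c)

lemma aux_integral_fderiv_eq_zero {d : ℕ} {h : Vec d → ℝ}
    (hc : ContDiff ℝ (⊤ : ℕ∞) h) (hs : HasCompactSupport h) (c : Vec d) :
    ∫ x, fderiv ℝ h x c = 0 := by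
  have h0 := integral_mul_fderiv_eq_neg_fderiv_mul_of_integrable
    (μ := volume) (f := fun _ : Vec d => (1:ℝ)) (g := h) (v := c)
    (by simp) (by simpa using fderiv_apply_integrable hc hs c)
    (by simpa using hc.continuous.integrable_of_hasCompactSupport hs)
    (fun x _ => differentiableAt_const 1) (fun x _ => hc.differentiable (by simp) x)
  simpa using h0

lemma inner_gradient_eq {d : ℕ} (g : Vec d → ℝ) (x c : Vec d) :
    ⟪c, gradient g x⟫ = fderiv ℝ g x c := by
  rw [real_inner_comm, gradient, InnerProductSpace.toDual_symm_apply]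

/-- total particle number conservation for the Vlasov update of Scheme-1. -/
theorem scheme1_particle_number_conservation
    {d : ℕ} (hd : 1 ≤ d) (Δt : ℝ)
    (fn fh fn1 : Vec d × Vec d → ℝ) (En En1 : Vec d → Vec d)
    (hfn : IsDensity fn) (hfh : IsDensity fh) (hfn1 : IsDensity fn1)
    (hEn : Continuous En) (hEn1 : Continuous En1)
    (h3 : ∀ x v : Vec d, fn1 (x, v) =
      fn (x, v) - Δt * (⟪v, gradx fh x v⟫ +
        (1 / 2) * ⟪En x + En1 x, gradv fh x v⟫)) :
    Npart fn1 = Npart fn := by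
  obtain ⟨hfc, hfs⟩ := hfh
  obtain ⟨hnc, hns⟩ := hfn
  have hslL : ∀ v : Vec d, ContDiff ℝ (⊤ : ℕ∞) (fun y => fh (y, v)) := fun v =>
    hfc.comp (contDiff_id.prodMk contDiff_const)
  have hslR : ∀ x : Vec d, ContDiff ℝ (⊤ : ℕ∞) (fun w => fh (x, w)) := fun x =>
    hfc.comp (contDiff_const.prodMk contDiff_id)
  set Au : Vec d × Vec d → ℝ := fun p => fderiv ℝ fh p (p.2, (0 : Vec d)) with hAu
  have hfdL : ∀ x v c : Vec d,
      fderiv ℝ (fun y => fh (y, v)) x c = fderiv ℝ fh (x, v) (c, (0 : Vec d)) := by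
    intro x v c
    have h1 : HasFDerivAt (fun y => fh (y, v))
        ((fderiv ℝ fh (x, v)).comp (ContinuousLinearMap.inl ℝ (Vec d) (Vec d))) x :=
      ((hfc.differentiable (by simp) (x, v)).hasFDerivAt).comp x (hasFDerivAt_prodMk_left x v)
    rw [h1.fderiv]
    rfl
  have hAcont : Continuous Au :=
    (hfc.continuous_fderiv (by simp)).clm_apply (continuous_snd.prodMk continuous_const)
  have hAsupp : HasCompactSupport Au := by
    apply (hfs.fderiv ℝ).mono
    intro p hp
    simp only [Function.mem_support] at hp ⊢
    intro h0
    apply hp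
    simp [hAu, h0]
  have hAint : Integrable Au := hAcont.integrable_of_hasCompactSupport hAsupp
  have hfnint : Integrable fn := hnc.continuous.integrable_of_hasCompactSupport hns
  have key : ∀ x : Vec d, ∫ v, fn1 (x, v) = (∫ v, fn (x, v)) - Δt * ∫ v, Au (x, v) := by
    intro x
    have hBzero : ∫ v, fderiv ℝ (fun w => fh (x, w)) v (En x + En1 x) = 0 :=
      aux_integral_fderiv_eq_zero (hslR x) (slice_ccs_right hfs x) _
    have hintfn : Integrable (fun v => fn (x, v)) :=
      (hnc.continuous.comp (Continuous.prodMk_right x)).integrable_of_hasCompactSupport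
        (slice_ccs_right hns x)
    have hintA : Integrable (fun v => Au (x, v)) :=
      (hAcont.comp (Continuous.prodMk_right x)).integrable_of_hasCompactSupport
        (slice_ccs_right hAsupp x)
    have hintB : Integrable (fun v => fderiv ℝ (fun w => fh (x, w)) v (En x + En1 x)) :=
      fderiv_apply_integrable (hslR x) (slice_ccs_right hfs x) _
    have heq : ∀ v, fn1 (x, v) = fn (x, v) - Δt * (Au (x, v) +
        (1 / 2) * fderiv ℝ (fun w => fh (x, w)) v (En x + En1 x)) := by
      intro v
      rw [h3 x v]
      have e1 : ⟪v, gradx fh x v⟫ = Au (x, v) := by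
        rw [gradx, inner_gradient_eq, hfdL]
      have e2 : ⟪En x + En1 x, gradv fh x v⟫ =
          fderiv ℝ (fun w => fh (x, w)) v (En x + En1 x) := by
        rw [gradv, inner_gradient_eq]
      rw [e1, e2]
    calc ∫ v, fn1 (x, v)
        = ∫ v, (fn (x, v) - Δt * (Au (x, v) +
            (1 / 2) * fderiv ℝ (fun w => fh (x, w)) v (En x + En1 x))) := by
          exact integral_congr_ae (Filter.Eventually.of_forall heq)
      _ = (∫ v, fn (x, v)) - Δt * ((∫ v, Au (x, v)) +
            (1 / 2) * ∫ v, fderiv ℝ (fun w => fh (x, w)) v (En x + En1 x)) := by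
          have hint2 : Integrable (fun v => Δt * (Au (x, v) +
              (1 / 2) * fderiv ℝ (fun w => fh (x, w)) v (En x + En1 x))) :=
            (hintA.add (hintB.const_mul _)).const_mul _
          have hintB2 : Integrable (fun v =>
              (1 / 2) * fderiv ℝ (fun w => fh (x, w)) v (En x + En1 x)) :=
            hintB.const_mul _
          rw [integral_sub hintfn hint2, integral_const_mul,
            integral_add hintA hintB2, integral_const_mul]
      _ = (∫ v, fn (x, v)) - Δt * ∫ v, Au (x, v) := by rw [hBzero]; ring
  have hAprod : Integrable Au (volume.prod volume) := by
    rw [← Measure.volume_eq_prod]; exact hAint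
  have hswap : ∫ x, ∫ v, Au (x, v) = 0 := by
    have hzero : ∀ v : Vec d, ∫ x, Au (x, v) = 0 := by
      intro v
      have h0 := aux_integral_fderiv_eq_zero (hslL v) (slice_ccs_left hfs v) v
      have : (fun x => fderiv ℝ (fun y => fh (y, v)) x v) = fun x => Au (x, v) := by
        funext x; rw [hfdL]
      rwa [this] at h0
    rw [integral_integral_swap (f := fun x v => Au (x, v)) hAprod]
    simp [hzero]
  have hfnprod : Integrable fn (volume.prod volume) := by
    rw [← Measure.volume_eq_prod]; exact hfnint
  have hfnint_x : Integrable (fun x => ∫ v, fn (x, v)) := hfnprod.integral_prod_left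
  have hAint_x : Integrable (fun x => ∫ v, Au (x, v)) := hAprod.integral_prod_left
  unfold Npart
  calc ∫ x, ∫ v, fn1 (x, v)
      = ∫ x, ((∫ v, fn (x, v)) - Δt * ∫ v, Au (x, v)) :=
        integral_congr_ae (Filter.Eventually.of_forall key)
    _ = (∫ x, ∫ v, fn (x, v)) - Δt * ∫ x, ∫ v, Au (x, v) := by
        have hAx2 : Integrable (fun x => Δt * ∫ v, Au (x, v)) := hAint_x.const_mul _
        rw [integral_sub hfnint_x hAx2, integral_const_mul]
    _ = ∫ x, ∫ v, fn (x, v) := by rw [hswap]; ring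
end
end
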